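/- Let n, m ≥ 1 be integers, let k = (k_1,…,k_n) be a weight vector with k_1 = max_{1≤j≤n} k_j, let L be an n×m real matrix with dual forms M_i, and let γ ∈ (0,1) be such that inf_{u ∈ ℤ^n, u ≠ 0} max_{1≤i≤m} ( max_{1≤j≤n} |u_j|^{1/(m k_j)} ) ‖M_i(u)‖ ≥ γ. Set R = ⌈γ^{−1/k_1}⌉ + 1, T_r = R^r, and let u_r ∈ ℤ^n be a sequence satisfying: T_r^{m k_1} < |u_1(r)| ≤ γ^{−m} T_r^{m k_1}, |u_j(r)| ≤ T_r^{m k_j} for 2 ≤ j ≤ n, and φ_r := max_{1≤i≤m} ‖M_i(u_r)‖ satisfies γ^{1+1/k_1} T_r^{−1} ≤ φ_r ≤ γ T_r^{−1}, with φ_r strictly decreasing and φ_r → 0. Then every α ∈ [0,1)^n with inf_r ‖u_r · α‖ > 0 belongs to Bad_L(k,n,m); that is, { α ∈ [0,1)^n : inf_r ‖u_r · α‖ > 0 } ⊆ Bad_L(k,n,m). -/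

import Mathlib

/-! Transference: for integer vectors `u ∈ ℤⁿ`, `q ∈ ℤᵐ` one has the identity
`u · α = Σᵢ qᵢ Mᵢ(u) - Σⱼ uⱼ (Lⱼ(q) - αⱼ)`, hence
`‖u · α‖ ≤ Σᵢ |qᵢ| ‖Mᵢ(u)‖ + Σⱼ |uⱼ| ‖Lⱼ(q) - αⱼ‖`.
Let `ε ≤ ‖u_r · α‖` for all `r`. Given `q ≠ 0`, take the first `r` with `φ_r ≤ ε / (2m|q|)`.
The first sum is then at most `ε / 2`, so some `|uⱼ(r)| ‖Lⱼ(q) - αⱼ‖ ≥ ε / (2n)`;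
minimality of `r` and `φ_{r-1} ≤ γ / T_{r-1}` give `T_r ≪ |q|`, whence
`|uⱼ(r)| ≪ T_r^{m kⱼ} ≪ |q|^{m kⱼ}`. -/

/-- Distance from a real number to the nearest integer. -/
noncomputable def dni (x : ℝ) : ℝ := |x - round x|

/-- Supremum norm of an integer vector, as a real number. -/
noncomputable def snorm {d : ℕ} (q : Fin d → ℤ) : ℝ := ⨆ i, |(q i : ℝ)|

/-- Euclidean norm of an integer vector. -/
noncomputable def enorm {d : ℕ} (u : Fin d → ℤ) : ℝ := Real.sqrt (∑ j, ((u j : ℝ)) ^ 2)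

/-- `L ∈ Bad(k, n, m)`:  inf over nonzero integer vectors `q` of
`max_j |q|_∞^{m k_j} ‖L_j(q)‖` is positive. -/
def badForm {n m : ℕ} (k : Fin n → ℝ) (L : Matrix (Fin n) (Fin m) ℝ) : Prop :=
  ∃ ε > (0 : ℝ), ∀ q : Fin m → ℤ, q ≠ 0 →
    ∃ j : Fin n, ε ≤ snorm q ^ ((m : ℝ) * k j) * dni (∑ i, (q i : ℝ) * L j i)

/-- The twisted set `Bad_L(k, n, m) ⊆ [0,1)^n`. -/
def badTwisted {n m : ℕ} (k : Fin n → ℝ) (L : Matrix (Fin n) (Fin m) ℝ) :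
    Set (Fin n → ℝ) :=
  {α | (∀ j, α j ∈ Set.Ico (0 : ℝ) 1) ∧ ∃ ε > (0 : ℝ), ∀ q : Fin m → ℤ, q ≠ 0 →
    ∃ j : Fin n, ε ≤ snorm q ^ ((m : ℝ) * k j) * dni ((∑ i, (q i : ℝ) * L j i) - α j)}

open Filter

lemma dni_eq_norm (x : ℝ) : dni x = ‖(x : UnitAddCircle)‖ := UnitAddCircle.norm_eq.symm

lemma dni_nonneg (x : ℝ) : 0 ≤ dni x := abs_nonneg _

lemma dni_add_le (x y : ℝ) : dni (x + y) ≤ dni x + dni y := by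
  simpa only [dni_eq_norm, AddCircle.coe_add] using norm_add_le (x : UnitAddCircle) y

lemma dni_sub_le (x y : ℝ) : dni (x - y) ≤ dni x + dni y := by
  simpa only [dni_eq_norm, AddCircle.coe_sub] using norm_sub_le (x : UnitAddCircle) y

lemma dni_int_mul_le (z : ℤ) (x : ℝ) : dni (z * x) ≤ |(z : ℝ)| * dni x := by
  simpa only [dni_eq_norm, ← zsmul_eq_mul, AddCircle.coe_zsmul, Int.norm_eq_abs]
    using norm_zsmul_le z (x : UnitAddCircle)

lemma dni_sum_int_mul_le {ι : Type*} [Fintype ι] (z : ι → ℤ) (x : ι → ℝ) :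
    dni (∑ i, z i * x i) ≤ ∑ i, |(z i : ℝ)| * dni (x i) :=
  (Finset.le_sum_of_subadditive dni (by simp [dni]) dni_add_le _ _).trans
    (Finset.sum_le_sum fun i _ => dni_int_mul_le (z i) (x i))

lemma abs_le_snorm {d : ℕ} (q : Fin d → ℤ) (i : Fin d) : |(q i : ℝ)| ≤ snorm q :=
  le_ciSup (f := fun i => |(q i : ℝ)|) (Finite.bddAbove_range _) i

lemma one_le_snorm {d : ℕ} {q : Fin d → ℤ} (hq : q ≠ 0) : 1 ≤ snorm q := by
  obtain ⟨i, hi⟩ := Function.ne_iff.mp hq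
  exact (by exact_mod_cast Int.one_le_abs hi : (1 : ℝ) ≤ |(q i : ℝ)|).trans (abs_le_snorm q i)

lemma dni_dot_le_dual_add_twisted {n m : ℕ} (L : Matrix (Fin n) (Fin m) ℝ) (u : Fin n → ℤ)
    (q : Fin m → ℤ) (α : Fin n → ℝ) :
    dni (∑ j, (u j : ℝ) * α j) ≤ ∑ i, |(q i : ℝ)| * dni (∑ j, (u j : ℝ) * L j i) +
      ∑ j, |(u j : ℝ)| * dni ((∑ i, (q i : ℝ) * L j i) - α j) := by
  have hsplit : ∑ j, (u j : ℝ) * α j = ∑ i, q i * (∑ j, (u j : ℝ) * L j i) -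
      ∑ j, u j * ((∑ i, (q i : ℝ) * L j i) - α j) := by
    simp only [mul_sub, Finset.sum_sub_distrib, Finset.mul_sum]
    rw [Finset.sum_comm]
    simp only [mul_left_comm]
    ring
  rw [hsplit]
  exact (dni_sub_le _ _).trans (add_le_add (dni_sum_int_mul_le _ _) (dni_sum_int_mul_le _ _))

lemma Fin.exists_div_le_of_le_sum {n : ℕ} (hn : 0 < n) {a : ℝ} {f : Fin n → ℝ}
    (h : a ≤ ∑ j, f j) : ∃ j, a / n ≤ f j := by
  have : ∑ _j : Fin n, a / n ≤ ∑ j, f j := by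
    rwa [Finset.sum_const, Finset.card_univ, Fintype.card_fin, nsmul_eq_mul,
      mul_div_cancel₀ _ (by positivity)]
  simpa using Finset.exists_le_of_sum_le ⟨⟨0, hn⟩, Finset.mem_univ _⟩ this

lemma exists_le_abs_mul_dni_twisted {n m : ℕ} (hn : 0 < n) (L : Matrix (Fin n) (Fin m) ℝ)
    (u : Fin n → ℤ) (q : Fin m → ℤ) (α : Fin n → ℝ) {ε : ℝ}
    (hε : ε ≤ dni (∑ j, (u j : ℝ) * α j))
    (hdual : ∑ i, |(q i : ℝ)| * dni (∑ j, (u j : ℝ) * L j i) ≤ ε / 2) :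
    ∃ j, ε / 2 / n ≤ |(u j : ℝ)| * dni ((∑ i, (q i : ℝ) * L j i) - α j) :=
  Fin.exists_div_le_of_le_sum hn (by linarith [dni_dot_le_dual_add_twisted L u q α])

lemma exists_le_and_pow_le_of_tendsto {φ : ℕ → ℝ} {R γ c : ℝ} (hR : 0 < R) (hc : 0 < c)
    (hφ : Tendsto φ atTop (nhds 0)) (hφR : ∀ r, φ r ≤ γ * (R ^ r)⁻¹) :
    ∃ r, φ r ≤ c ∧ R ^ r ≤ max 1 (γ * R / c) := by
  classical
  have hex : ∃ r, φ r ≤ c := (hφ.eventually (ge_mem_nhds hc)).exists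
  refine ⟨Nat.find hex, Nat.find_spec hex, ?_⟩
  rcases hr : Nat.find hex with _ | s
  · simp
  · have hcs : c < φ s := lt_of_not_ge (Nat.find_min hex (by omega))
    have hRs : R ^ s < γ / c := by
      rw [lt_div_iff₀ hc, mul_comm, ← lt_div_iff₀ (pow_pos hR s), div_eq_mul_inv]
      exact hcs.trans_le (hφR s)
    calc R ^ (s + 1) = R ^ s * R := pow_succ R s
      _ ≤ γ / c * R := mul_le_mul_of_nonneg_right hRs.le hR.le
      _ = γ * R / c := div_mul_eq_mul_div γ c R
      _ ≤ _ := le_max_right _ _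

lemma exists_le_div_and_pow_le_mul {φ : ℕ → ℝ} {R γ a Q : ℝ} (hR : 0 < R) (ha : 0 < a)
    (hQ : 1 ≤ Q) (hφ : Tendsto φ atTop (nhds 0)) (hφR : ∀ r, φ r ≤ γ * (R ^ r)⁻¹) :
    ∃ r, φ r ≤ a / Q ∧ R ^ r ≤ max 1 (γ * R / a) * Q := by
  obtain ⟨r, hφr, hRr⟩ := exists_le_and_pow_le_of_tendsto (c := a / Q) hR (by positivity) hφ hφR
  refine ⟨r, hφr, hRr.trans (max_le (one_le_mul_of_one_le_of_one_le (le_max_left _ _) hQ) ?_)⟩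
  calc γ * R / (a / Q) = γ * R / a * Q := by field_simp
    _ ≤ max 1 (γ * R / a) * Q := by gcongr; exact le_max_right _ _

lemma sum_abs_mul_le_snorm_mul {d : ℕ} (q : Fin d → ℤ) {x : Fin d → ℝ} {c : ℝ}
    (hx : ∀ i, 0 ≤ x i) (hxc : ∀ i, x i ≤ c) : ∑ i, |(q i : ℝ)| * x i ≤ d * (snorm q * c) := by
  calc ∑ i, |(q i : ℝ)| * x i ≤ ∑ _i : Fin d, snorm q * c :=
        Finset.sum_le_sum fun i _ =>
          mul_le_mul (abs_le_snorm q i) (hxc i) (hx i) ((abs_nonneg _).trans (abs_le_snorm q i))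
    _ = d * (snorm q * c) := by simp

lemma rpow_le_rpow_mul_rpow_of_le_mul {T C Q e M : ℝ} (hT : 0 ≤ T) (hTQ : T ≤ C * Q)
    (hC : 1 ≤ C) (hQ : 0 ≤ Q) (he : 0 ≤ e) (heM : e ≤ M) : T ^ e ≤ C ^ M * Q ^ e :=
  calc T ^ e ≤ (C * Q) ^ e := Real.rpow_le_rpow hT hTQ he
    _ = C ^ e * Q ^ e := Real.mul_rpow (by linarith) hQ
    _ ≤ C ^ M * Q ^ e := by gcongr

theorem subset_badTwisted_general (n m : ℕ) (hn : 0 < n)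
    (k : Fin n → ℝ) (hk : ∀ j, 0 < k j) (hksum : ∑ j, k j = 1)
    (L : Matrix (Fin n) (Fin m) ℝ) (γ : ℝ) (hγ : γ ∈ Set.Ioo (0 : ℝ) 1)
    (R : ℕ) (hR : R = ⌈γ ^ (-(1 / k ⟨0, hn⟩))⌉₊ + 1)
    (u : ℕ → Fin n → ℤ) (φ : ℕ → ℝ)
    (hφ : ∀ r : ℕ, φ r = ⨆ i, dni (∑ j, (u r j : ℝ) * L j i))
    (hu1 : ∀ r : ℕ,
      ((R : ℝ) ^ r) ^ ((m : ℝ) * k ⟨0, hn⟩) < |(u r ⟨0, hn⟩ : ℝ)| ∧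
      |(u r ⟨0, hn⟩ : ℝ)| ≤ γ ^ (-(m : ℝ)) * ((R : ℝ) ^ r) ^ ((m : ℝ) * k ⟨0, hn⟩))
    (huj : ∀ r : ℕ, ∀ j : Fin n, j ≠ ⟨0, hn⟩ →
      |(u r j : ℝ)| ≤ ((R : ℝ) ^ r) ^ ((m : ℝ) * k j))
    (hφbd : ∀ r : ℕ,
      γ ^ (1 + 1 / k ⟨0, hn⟩) * ((R : ℝ) ^ r)⁻¹ ≤ φ r ∧ φ r ≤ γ * ((R : ℝ) ^ r)⁻¹)
    (hφlim : Tendsto φ atTop (nhds 0)) :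
    {α : Fin n → ℝ | (∀ j, α j ∈ Set.Ico (0 : ℝ) 1) ∧
        ∃ ε > (0 : ℝ), ∀ r : ℕ, ε ≤ dni (∑ j, (u r j : ℝ) * α j)}
      ⊆ badTwisted k L := by
  rintro α ⟨hα01, ε, hε, hεr⟩
  have hγ0 : 0 < γ := hγ.1
  have hR1 : (1 : ℝ) ≤ R := by rw [hR]; exact_mod_cast Nat.le_add_left 1 _
  have hu : ∀ r j, |(u r j : ℝ)| ≤ γ ^ (-(m : ℝ)) * ((R : ℝ) ^ r) ^ ((m : ℝ) * k j) := by
    intro r j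
    by_cases hj : j = ⟨0, hn⟩
    · subst hj; exact (hu1 r).2
    · refine (huj r j hj).trans (le_mul_of_one_le_left (by positivity) ?_)
      exact Real.one_le_rpow_of_pos_of_le_one_of_nonpos hγ0 hγ.2.le (by simp)
  set C : ℝ := max 1 (γ * R / (ε / (2 * m)))
  set K : ℝ := γ ^ (-(m : ℝ)) * C ^ (m : ℝ)
  refine ⟨hα01, ε / 2 / n / K, by positivity, fun q hq => ?_⟩
  have hQ : 1 ≤ snorm q := one_le_snorm hq
  obtain ⟨i₀, -⟩ := Function.ne_iff.mp hq
  have hm : 0 < m := i₀.pos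
  obtain ⟨r, hφr, hRQ⟩ := exists_le_div_and_pow_le_mul (a := ε / (2 * m)) (by positivity)
    (by positivity) hQ hφlim fun r => (hφbd r).2
  have hdual : ∑ i, |(q i : ℝ)| * dni (∑ j, (u r j : ℝ) * L j i) ≤ ε / 2 := by
    refine (sum_abs_mul_le_snorm_mul q (fun i => dni_nonneg _) fun i => ?_).trans_eq
      (by field_simp : (m : ℝ) * (snorm q * (ε / (2 * m) / snorm q)) = ε / 2)
    exact (hφ r ▸ le_ciSup (Finite.bddAbove_range _) i).trans hφr
  obtain ⟨j, hj⟩ := exists_le_abs_mul_dni_twisted hn L (u r) q α (hεr r) hdual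
  have hkj : (m : ℝ) * k j ≤ m :=
    mul_le_of_le_one_right (Nat.cast_nonneg m)
      (hksum ▸ Finset.single_le_sum (fun i _ => (hk i).le) (Finset.mem_univ j))
  have hT : ((R : ℝ) ^ r) ^ ((m : ℝ) * k j) ≤ C ^ (m : ℝ) * snorm q ^ ((m : ℝ) * k j) :=
    rpow_le_rpow_mul_rpow_of_le_mul (by positivity) hRQ (le_max_left _ _)
      (zero_le_one.trans hQ) (by positivity [hk j]) hkj
  refine ⟨j, (div_le_iff₀ (by positivity)).2 ?_⟩
  calc ε / 2 / n ≤ |(u r j : ℝ)| * dni ((∑ i, (q i : ℝ) * L j i) - α j) := hj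
    _ ≤ γ ^ (-(m : ℝ)) * (C ^ (m : ℝ) * snorm q ^ ((m : ℝ) * k j)) *
          dni ((∑ i, (q i : ℝ) * L j i) - α j) := by
        refine mul_le_mul_of_nonneg_right ((hu r j).trans ?_) (dni_nonneg _)
        exact mul_le_mul_of_nonneg_left hT (by positivity)
    _ = snorm q ^ ((m : ℝ) * k j) * dni ((∑ i, (q i : ℝ) * L j i) - α j) * K := by ring

/-- With `L ∈ Bad(k,n,m)`-type data: dual forms
`M_i(u) = Σ_j u_j x_{ji}` badly approximable with constant `γ`, and a sequence
`u_r` of best approximations with `φ_r = max_i ‖M_i(u_r)‖` controlled as in the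
paper, every `α ∈ [0,1)^n` with `inf_r ‖u_r · α‖ > 0` lies in `Bad_L(k,n,m)`. -/
theorem subset_badTwisted (n m : ℕ) (hn : 0 < n) (hm : 0 < m)
    (k : Fin n → ℝ) (hk : ∀ j, 0 < k j) (hksum : ∑ j, k j = 1)
    (hk1 : ∀ j, k j ≤ k ⟨0, hn⟩)
    (L : Matrix (Fin n) (Fin m) ℝ) (γ : ℝ) (hγ : γ ∈ Set.Ioo (0 : ℝ) 1)
    (hbad : ∀ u : Fin n → ℤ, u ≠ 0 → ∃ i : Fin m,
      γ ≤ (⨆ j, |(u j : ℝ)| ^ (1 / ((m : ℝ) * k j))) * dni (∑ j, (u j : ℝ) * L j i))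
    (R : ℕ) (hR : R = ⌈γ ^ (-(1 / k ⟨0, hn⟩))⌉₊ + 1)
    (u : ℕ → Fin n → ℤ) (φ : ℕ → ℝ)
    (hφ : ∀ r : ℕ, φ r = ⨆ i, dni (∑ j, (u r j : ℝ) * L j i))
    (hu1 : ∀ r : ℕ,
      ((R : ℝ) ^ r) ^ ((m : ℝ) * k ⟨0, hn⟩) < |(u r ⟨0, hn⟩ : ℝ)| ∧
      |(u r ⟨0, hn⟩ : ℝ)| ≤ γ ^ (-(m : ℝ)) * ((R : ℝ) ^ r) ^ ((m : ℝ) * k ⟨0, hn⟩))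
    (huj : ∀ r : ℕ, ∀ j : Fin n, j ≠ ⟨0, hn⟩ →
      |(u r j : ℝ)| ≤ ((R : ℝ) ^ r) ^ ((m : ℝ) * k j))
    (hφbd : ∀ r : ℕ,
      γ ^ (1 + 1 / k ⟨0, hn⟩) * ((R : ℝ) ^ r)⁻¹ ≤ φ r ∧ φ r ≤ γ * ((R : ℝ) ^ r)⁻¹)
    (hφdec : ∀ r : ℕ, φ (r + 1) < φ r)
    (hφlim : Tendsto φ atTop (nhds 0)) :
    {α : Fin n → ℝ | (∀ j, α j ∈ Set.Ico (0 : ℝ) 1) ∧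
        ∃ ε > (0 : ℝ), ∀ r : ℕ, ε ≤ dni (∑ j, (u r j : ℝ) * α j)}
      ⊆ badTwisted k L :=
  subset_badTwisted_general n m hn k hk hksum L γ hγ R hR u φ hφ hu1 huj hφbd hφlim
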